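/- There exists an absolute constant C such that the following holds. Let κ ≥ 1, let F be the norm F(x,y) := √(κ⁻¹x² + κy²), and for θ ∈ ℝ let F^θ(u) := F(R_θᵀ u), where R_θ is the rotation of ℝ² by angle θ. Fix u ∈ ℤ² ∖ {0}, and for each v ∈ ℤ² with ‖u‖ ≤ ‖v‖, ⟨u,v⟩ ≥ 0 and |det(u,v)| = 1, let I_{u,v} := {θ ∈ [0, 2π] : u and v do not form an F^θ-acute angle}. Then the sum over all such v of the Lebesgue measure of I_{u,v} is at most C(1 + ln κ)/‖u‖²; moreover this sum equals 0 if ‖u‖ ≥ √κ. -/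

import Mathlib

open scoped RealInnerProductSpace
open MeasureTheory Real

noncomputable section

abbrev E2 : Type := EuclideanSpace ℝ (Fin 2)

def mk2 (a b : ℝ) : E2 := WithLp.toLp 2 ![a, b]

def IsAsymNorm (F : E2 → ℝ) : Prop :=
  ConvexOn ℝ Set.univ F ∧
  (∀ (c : ℝ), 0 ≤ c → ∀ u : E2, F (c • u) = c * F u) ∧
  (∀ u : E2, 0 ≤ F u) ∧
  (∀ u : E2, u ≠ 0 → 0 < F u)

def IsAcute (F : E2 → ℝ) (u v : E2) : Prop :=
  ∀ δ : ℝ, 0 ≤ δ → F u ≤ F (u + δ • v) ∧ F v ≤ F (v + δ • u)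

noncomputable def kappa (F : E2 → ℝ) : ℝ :=
  sSup {r : ℝ | ∃ u v : E2, ‖u‖ = 1 ∧ ‖v‖ = 1 ∧ r = F u / F v}

def det2 (u v : E2) : ℝ := u 0 * v 1 - u 1 * v 0

def IsIntVec (u : E2) : Prop := (∃ n : ℤ, u 0 = (n : ℝ)) ∧ (∃ n : ℤ, u 1 = (n : ℝ))

def eTheta (θ : ℝ) : E2 := mk2 (Real.cos θ) (Real.sin θ)

noncomputable def phiF (F : E2 → ℝ) (θ : ℝ) : ℝ :=
  Real.arctan (det2 (eTheta θ) (gradient F (eTheta θ)) / F (eTheta θ))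

def rot2 (θ : ℝ) (w : E2) : E2 :=
  mk2 (Real.cos θ * w 0 - Real.sin θ * w 1) (Real.sin θ * w 0 + Real.cos θ * w 1)

def perp (z : E2) : E2 := mk2 (-(z 1)) (z 0)

/-- The set of grid orientations `θ ∈ [0, 2π]` for which `u, v` do not form an
`F^θ`-acute angle, where `F^θ(w) := F(R_θᵀ w)`. -/
def badAngles (F : E2 → ℝ) (u v : E2) : Set ℝ :=
  {θ : ℝ | θ ∈ Set.Icc 0 (2 * Real.pi) ∧ ¬ IsAcute (fun w => F (rot2 (-θ) w)) u v}

/-- The sum, over all `v ∈ ℤ²` with `‖u‖ ≤ ‖v‖`, `⟨u,v⟩ ≥ 0` and `|det(u,v)| = 1`,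
of the Lebesgue measures of the sets `badAngles F u v`. -/
noncomputable def totalBad (F : E2 → ℝ) (u : E2) : ENNReal :=
  ∑' v : {v : E2 // IsIntVec v ∧ ‖u‖ ≤ ‖v‖ ∧ 0 ≤ ⟪u, v⟫ ∧ |det2 u v| = 1},
    MeasureTheory.volume (badAngles F u v.1)

/-! Write `m = (κ + κ⁻¹)/2`, `s = (κ - κ⁻¹)/2`, so that `m² = s² + 1`. The quadratic form of `F^θ`
evaluated on `(u, v)` is `m⟪u, v⟫ - s‖u‖‖v‖ cos(2θ - φ)`, with `φ` the argument of `uv` read as a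
product of complex numbers, and where it is nonnegative the angle is acute. Since
`‖u‖²‖v‖² = ⟪u, v⟫² + det(u, v)² = ⟪u, v⟫² + 1`, it is nonnegative for all `θ` once `⟪u, v⟫ ≥ s`,
which holds whenever `‖u‖ ≥ √κ`. Otherwise every bad `θ` has `cos(2θ - φ) > ⟪u, v⟫/(‖u‖‖v‖)`,
a set of measure `O(1/(‖u‖‖v‖))`. An admissible `v` is determined by `det(u, v) = ±1` and
`k = ⌊⟪u, v⟫/‖u‖²⌋`, where `‖u‖‖v‖ ≥ max(k, 1)‖u‖²` and, if `v` has bad orientations, `k ≤ κ`;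
so the total is a harmonic sum `O((1 + log κ)/‖u‖²)`. -/

lemma E2.inner_def (u v : E2) : ⟪u, v⟫ = u 0 * v 0 + u 1 * v 1 := by
  simp [PiLp.inner_apply, Fin.sum_univ_two, mul_comm]

lemma E2.norm_sq (u : E2) : ‖u‖ ^ 2 = u 0 ^ 2 + u 1 ^ 2 := by
  rw [← real_inner_self_eq_norm_sq, E2.inner_def]; ring

lemma E2.eq_zero_iff {w : E2} : w = 0 ↔ w 0 = 0 ∧ w 1 = 0 := by
  refine ⟨fun h => by simp [h], fun ⟨h0, h1⟩ => ?_⟩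
  ext i; fin_cases i <;> simp [h0, h1]

lemma inner_sq_add_det2_sq (u v : E2) : ⟪u, v⟫ ^ 2 + det2 u v ^ 2 = ‖u‖ ^ 2 * ‖v‖ ^ 2 := by
  rw [E2.inner_def, det2, E2.norm_sq, E2.norm_sq]; ring

lemma norm_mul_norm_sq_of_abs_det2_eq_one {u v : E2} (hd : |det2 u v| = 1) :
    (‖u‖ * ‖v‖) ^ 2 = ⟪u, v⟫ ^ 2 + 1 := by
  rw [mul_pow, ← inner_sq_add_det2_sq, ← sq_abs (det2 u v), hd, one_pow]

def toComplex (w : E2) : ℂ := ⟨w 0, w 1⟩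

lemma norm_toComplex (w : E2) : ‖toComplex w‖ = ‖w‖ := by
  rw [← sq_eq_sq₀ (norm_nonneg _) (norm_nonneg _), Complex.sq_norm, toComplex, Complex.normSq_mk,
    E2.norm_sq]
  ring

lemma Complex.re_mul_cos_add_im_mul_sin (z : ℂ) (y : ℝ) :
    z.re * Real.cos y + z.im * Real.sin y = ‖z‖ * Real.cos (y - z.arg) := by
  rw [Real.cos_sub, ← Complex.norm_mul_cos_arg, ← Complex.norm_mul_sin_arg]; ring

def rot2ₗ (θ : ℝ) : E2 →ₗ[ℝ] E2 where
  toFun := rot2 θ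
  map_add' u v := by ext i; fin_cases i <;> simp [rot2, mk2] <;> ring
  map_smul' c u := by ext i; fin_cases i <;> simp [rot2, mk2] <;> ring

lemma IsAcute.comp_linearMap {G : E2 → ℝ} {u v : E2} (L : E2 →ₗ[ℝ] E2)
    (h : IsAcute G (L u) (L v)) : IsAcute (fun w => G (L w)) u v := by
  intro δ hδ
  simpa only [map_add, map_smul] using h δ hδ

lemma isAcute_sqrt_weighted {a b : ℝ} (ha : 0 ≤ a) (hb : 0 ≤ b) {u v : E2}
    (h : 0 ≤ a * (u 0 * v 0) + b * (u 1 * v 1)) :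
    IsAcute (fun w => √(a * w 0 ^ 2 + b * w 1 ^ 2)) u v := by
  -- `q (x + δ y) = q x + 2 δ b(x, y) + δ² q y` for the weighted form `q` and its polarization `b`
  have key : ∀ x y : E2, 0 ≤ a * (x 0 * y 0) + b * (x 1 * y 1) → ∀ δ : ℝ, 0 ≤ δ →
      √(a * x 0 ^ 2 + b * x 1 ^ 2) ≤ √(a * (x + δ • y) 0 ^ 2 + b * (x + δ • y) 1 ^ 2) := by
    intro x y hxy δ hδ
    apply Real.sqrt_le_sqrt
    simp only [PiLp.add_apply, PiLp.smul_apply, smul_eq_mul]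
    nlinarith [mul_nonneg hδ hxy, mul_nonneg (mul_nonneg hδ hδ)
      (add_nonneg (mul_nonneg ha (sq_nonneg (y 0))) (mul_nonneg hb (sq_nonneg (y 1))))]
  intro δ hδ
  exact ⟨key u v h δ hδ, key v u (by linarith) δ hδ⟩

lemma rot2_weighted_inner (κ θ : ℝ) (u v : E2) :
    κ⁻¹ * (rot2 (-θ) u 0 * rot2 (-θ) v 0) + κ * (rot2 (-θ) u 1 * rot2 (-θ) v 1) =
      (κ + κ⁻¹) / 2 * ⟪u, v⟫ -
        (κ - κ⁻¹) / 2 * (‖u‖ * ‖v‖) * cos (2 * θ - (toComplex u * toComplex v).arg) := by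
  rw [← norm_toComplex u, ← norm_toComplex v, ← norm_mul, mul_assoc,
    ← Complex.re_mul_cos_add_im_mul_sin]
  simp only [Complex.mul_re, Complex.mul_im, toComplex, E2.inner_def, rot2, mk2, cos_neg, sin_neg,
    cos_two_mul, sin_two_mul, Matrix.cons_val_zero, Matrix.cons_val_one, Matrix.cons_val_fin_one]
  linear_combination (κ⁻¹ * u 1 * v 1 + κ * u 0 * v 0) * sin_sq_add_cos_sq θ

lemma sq_le_of_lt_cos {x t : ℝ} (hx : |x| ≤ π) (ht : t < cos x) : x ^ 2 ≤ 16 * (1 - t) := by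
  have hquad := Real.cos_le_one_sub_mul_cos_sq hx
  have ht1 : 0 ≤ 1 - t := by linarith [cos_le_one x]
  have hπ : π ^ 2 ≤ 16 := by nlinarith [pi_pos, pi_le_four]
  have : 2 * x ^ 2 ≤ (1 - t) * π ^ 2 := by
    rw [← div_le_iff₀ (by positivity), ← div_mul_eq_mul_div]; linarith
  nlinarith [mul_le_mul_of_nonneg_left hπ ht1, sq_nonneg x]

lemma volume_setOf_lt_cos_le (φ t : ℝ) (hφ : |φ| ≤ π) :
    volume {θ | θ ∈ Set.Icc 0 (2 * π) ∧ t < cos (2 * θ - φ)} ≤ ENNReal.ofReal (20 * √(1 - t)) := by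
  have hcover : {θ | θ ∈ Set.Icc 0 (2 * π) ∧ t < cos (2 * θ - φ)} ⊆
      ⋃ k ∈ Finset.Icc (-1 : ℤ) 3, Metric.closedBall (φ / 2 + k * π) (2 * √(1 - t)) := by
    rintro θ ⟨⟨hθ0, hθ2π⟩, hcos⟩
    set x : ℝ := (((2 * θ - φ : ℝ)) : Real.Angle).toReal
    obtain ⟨k, hk⟩ := Real.Angle.angle_eq_iff_two_pi_dvd_sub.1
      (Real.Angle.coe_toReal (2 * θ - φ : ℝ)).symm
    have hx : |x| ≤ π := Real.Angle.abs_toReal_le_pi _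
    have hxcos : t < cos x := by rwa [Real.Angle.cos_toReal, Real.Angle.cos_coe]
    have hkI : (-1 : ℝ) ≤ k ∧ (k : ℝ) ≤ 3 := by
      have := abs_le.1 hφ
      have := abs_le.1 hx
      constructor <;> nlinarith [pi_pos]
    refine Set.mem_biUnion (x := k)
      (Finset.mem_coe.2 (Finset.mem_Icc.2 ⟨by exact_mod_cast hkI.1, by exact_mod_cast hkI.2⟩)) ?_
    have hθ : θ - (φ / 2 + k * π) = x / 2 := by linarith
    rw [Metric.mem_closedBall, Real.dist_eq, hθ, abs_div, abs_two, div_le_iff₀ two_pos,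
      ← sq_le_sq₀ (abs_nonneg x) (by positivity), sq_abs]
    nlinarith [sq_sqrt (by linarith [cos_le_one x] : 0 ≤ 1 - t), sq_le_of_lt_cos hx hxcos]
  calc volume _
      ≤ volume (⋃ k ∈ Finset.Icc (-1 : ℤ) 3, Metric.closedBall (φ / 2 + k * π) (2 * √(1 - t))) :=
        measure_mono hcover
    _ ≤ ∑ k ∈ Finset.Icc (-1 : ℤ) 3, volume (Metric.closedBall (φ / 2 + k * π) (2 * √(1 - t))) :=
        measure_biUnion_finset_le _ _
    _ = ENNReal.ofReal (20 * √(1 - t)) := by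
        rw [Finset.sum_congr rfl fun k _ => Real.volume_closedBall _ _, Finset.sum_const,
          show (Finset.Icc (-1 : ℤ) 3).card = 5 from rfl, nsmul_eq_mul,
          ← ENNReal.ofReal_natCast, ← ENNReal.ofReal_mul (by norm_num)]
        ring_nf

lemma badAngles_subset {κ : ℝ} (hκ : 0 ≤ κ) {F : E2 → ℝ}
    (hF : ∀ w : E2, F w = √(κ⁻¹ * w 0 ^ 2 + κ * w 1 ^ 2)) (u v : E2) :
    badAngles F u v ⊆ {θ | θ ∈ Set.Icc 0 (2 * π) ∧ (κ + κ⁻¹) / 2 * ⟪u, v⟫ <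
      (κ - κ⁻¹) / 2 * (‖u‖ * ‖v‖) * cos (2 * θ - (toComplex u * toComplex v).arg)} := by
  rintro θ ⟨hθ, hbad⟩
  refine ⟨hθ, lt_of_not_ge fun h => hbad ?_⟩
  obtain rfl : F = fun w => √(κ⁻¹ * w 0 ^ 2 + κ * w 1 ^ 2) := funext hF
  refine IsAcute.comp_linearMap (rot2ₗ (-θ)) (isAcute_sqrt_weighted (by positivity) hκ ?_)
  rw [rot2ₗ, LinearMap.coe_mk, AddHom.coe_mk, rot2_weighted_inner]
  linarith

lemma badAngles_eq_empty {κ : ℝ} (hκ : 1 ≤ κ) {F : E2 → ℝ}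
    (hF : ∀ w : E2, F w = √(κ⁻¹ * w 0 ^ 2 + κ * w 1 ^ 2)) {u v : E2}
    (hp : (κ - κ⁻¹) / 2 ≤ ⟪u, v⟫) (hd : |det2 u v| = 1) : badAngles F u v = ∅ := by
  refine Set.eq_empty_of_subset_empty ((badAngles_subset (by linarith) hF u v).trans ?_)
  rintro θ ⟨-, hθ⟩
  have hκ0 : 0 < κ := by linarith
  have hκ' : κ⁻¹ * κ = 1 := inv_mul_cancel₀ hκ0.ne'
  have hs : 0 ≤ (κ - κ⁻¹) / 2 := by linarith [inv_le_one_of_one_le₀ hκ]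
  have hN := norm_mul_norm_sq_of_abs_det2_eq_one hd
  have hsN : (κ - κ⁻¹) / 2 * (‖u‖ * ‖v‖) ≤ (κ + κ⁻¹) / 2 * ⟪u, v⟫ := by
    have hm : ((κ + κ⁻¹) / 2) ^ 2 = ((κ - κ⁻¹) / 2) ^ 2 + 1 := by linear_combination hκ'
    rw [← sq_le_sq₀ (by positivity) (by have := hs.trans hp; positivity), mul_pow, hN, mul_pow, hm]
    nlinarith [mul_le_mul hp hp hs (hs.trans hp)]
  nlinarith [cos_le_one (2 * θ - (toComplex u * toComplex v).arg),
    mul_nonneg hs (mul_nonneg (norm_nonneg u) (norm_nonneg v))]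

lemma one_sub_div_le_inv_sq {p N : ℝ} (hp : 0 ≤ p) (hN : N ^ 2 = p ^ 2 + 1) (hN0 : 0 < N) :
    1 - p / N ≤ (N ^ 2)⁻¹ := by
  have hpN : p ≤ N := by nlinarith
  have hN2 : 0 < N ^ 2 := by positivity
  rw [show 1 - p / N = (N ^ 2 - p * N) / N ^ 2 by field_simp, div_le_iff₀ hN2,
    inv_mul_cancel₀ hN2.ne']
  nlinarith

lemma volume_badAngles_le {κ : ℝ} (hκ : 1 ≤ κ) {F : E2 → ℝ}
    (hF : ∀ w : E2, F w = √(κ⁻¹ * w 0 ^ 2 + κ * w 1 ^ 2)) {u v : E2}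
    (hp : 0 ≤ ⟪u, v⟫) (hd : |det2 u v| = 1) :
    volume (badAngles F u v) ≤ ENNReal.ofReal (20 / (‖u‖ * ‖v‖)) := by
  set N := ‖u‖ * ‖v‖
  set φ := (toComplex u * toComplex v).arg
  have hN : N ^ 2 = ⟪u, v⟫ ^ 2 + 1 := norm_mul_norm_sq_of_abs_det2_eq_one hd
  have hN0 : 0 < N := by nlinarith [mul_nonneg (norm_nonneg u) (norm_nonneg v)]
  have hs : 0 ≤ (κ - κ⁻¹) / 2 := by linarith [inv_le_one_of_one_le₀ hκ]
  have hsub : badAngles F u v ⊆ {θ | θ ∈ Set.Icc 0 (2 * π) ∧ ⟪u, v⟫ / N < cos (2 * θ - φ)} := by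
    refine (badAngles_subset (by linarith) hF u v).trans fun θ ⟨hθ, hbad⟩ => ⟨hθ, ?_⟩
    rw [div_lt_iff₀ hN0]
    have hms : (κ - κ⁻¹) / 2 * ⟪u, v⟫ ≤ (κ + κ⁻¹) / 2 * ⟪u, v⟫ := by
      nlinarith [inv_pos.2 (by linarith : 0 < κ)]
    nlinarith
  calc volume (badAngles F u v) ≤ ENNReal.ofReal (20 * √(1 - ⟪u, v⟫ / N)) :=
        (measure_mono hsub).trans (volume_setOf_lt_cos_le φ _ (Complex.abs_arg_le_pi _))
    _ ≤ ENNReal.ofReal (20 / N) := by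
        refine ENNReal.ofReal_le_ofReal ?_
        rw [div_eq_mul_inv]
        refine mul_le_mul_of_nonneg_left ?_ (by norm_num)
        calc √(1 - ⟪u, v⟫ / N) ≤ √((N ^ 2)⁻¹) := Real.sqrt_le_sqrt (one_sub_div_le_inv_sq hp hN hN0)
          _ = N⁻¹ := by rw [Real.sqrt_inv, Real.sqrt_sq hN0.le]

lemma IsIntVec.sub {v w : E2} (hv : IsIntVec v) (hw : IsIntVec w) : IsIntVec (v - w) := by
  obtain ⟨⟨a, ha⟩, ⟨b, hb⟩⟩ := hv
  obtain ⟨⟨c, hc⟩, ⟨d, hd⟩⟩ := hw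
  exact ⟨⟨a - c, by simp [ha, hc]⟩, ⟨b - d, by simp [hb, hd]⟩⟩

lemma IsIntVec.det2 {v w : E2} (hv : IsIntVec v) (hw : IsIntVec w) : ∃ n : ℤ, det2 v w = n := by
  obtain ⟨⟨a, ha⟩, ⟨b, hb⟩⟩ := hv
  obtain ⟨⟨c, hc⟩, ⟨d, hd⟩⟩ := hw
  exact ⟨a * d - b * c, by simp [_root_.det2, ha, hb, hc, hd]⟩

lemma one_le_norm_sq_of_isIntVec {u : E2} (hu : IsIntVec u) (hu0 : u ≠ 0) : 1 ≤ ‖u‖ ^ 2 := by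
  obtain ⟨⟨a, ha⟩, ⟨b, hb⟩⟩ := hu
  have hab : a ≠ 0 ∨ b ≠ 0 := by
    by_contra! h
    exact hu0 (E2.eq_zero_iff.2 ⟨by simp [ha, h.1], by simp [hb, h.2]⟩)
  have : 1 ≤ a ^ 2 + b ^ 2 := by
    rcases hab with h | h
    · nlinarith [Int.one_le_abs h, sq_abs a, sq_nonneg b]
    · nlinarith [Int.one_le_abs h, sq_abs b, sq_nonneg a]
  have hR : ((1 : ℤ) : ℝ) ≤ ((a ^ 2 + b ^ 2 : ℤ) : ℝ) := Int.cast_le.2 this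
  push_cast at hR
  rw [E2.norm_sq, ha, hb]
  exact hR

lemma eq_of_det2_eq_of_floor_eq {u v v' : E2} (hv : IsIntVec v) (hv' : IsIntVec v')
    (hd' : |det2 u v'| = 1) (hdet : det2 u v = det2 u v')
    (hfloor : ⌊⟪u, v⟫ / ‖u‖ ^ 2⌋ = ⌊⟪u, v'⟫ / ‖u‖ ^ 2⌋) : v = v' := by
  have hQ : 0 < ‖u‖ ^ 2 := by
    have : u ≠ 0 := by rintro rfl; simp [det2] at hd'
    positivity
  obtain ⟨m, hm⟩ := hv'.det2 (hv.sub hv')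
  set w := v - v'
  have hdw : u 0 * w 1 - u 1 * w 0 = 0 := by simp only [w, det2, PiLp.sub_apply] at hdet ⊢; linarith
  -- `det(u, w) = 0` makes `w` a multiple of `u`, with an integer ratio since `det(u, v') = ±1`
  have hw0 : ‖u‖ ^ 2 * w 0 = ⟪u, w⟫ * u 0 := by
    rw [E2.norm_sq, E2.inner_def]; linear_combination (-u 1) * hdw
  have hw1 : ‖u‖ ^ 2 * w 1 = ⟪u, w⟫ * u 1 := by
    rw [E2.norm_sq, E2.inner_def]; linear_combination (u 0) * hdw
  obtain ⟨e, he, he2⟩ : ∃ e : ℤ, det2 u v' = e ∧ (e : ℝ) * e = 1 := by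
    rcases (abs_eq zero_le_one).1 hd' with h | h
    exacts [⟨1, by simp [h]⟩, ⟨-1, by simp [h]⟩]
  have hinner : ⟪u, w⟫ = ((-(e * m) : ℤ) : ℝ) * ‖u‖ ^ 2 := by
    simp only [det2] at hm he
    push_cast
    linear_combination (-‖u‖ ^ 2 * e) * hm + e * v' 0 * hw1 - e * v' 1 * hw0 - ⟪u, w⟫ * he2 -
      ⟪u, w⟫ * e * he
  have hshift : ⟪u, v⟫ / ‖u‖ ^ 2 = ⟪u, v'⟫ / ‖u‖ ^ 2 + ((-(e * m) : ℤ) : ℝ) := by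
    rw [← mul_div_cancel_right₀ ((-(e * m) : ℤ) : ℝ) hQ.ne', ← hinner, ← add_div, ← inner_add_right,
      add_sub_cancel]
  rw [hshift, Int.floor_add_intCast, add_eq_left] at hfloor
  rw [hfloor, Int.cast_zero, zero_mul] at hinner
  refine sub_eq_zero.1 (E2.eq_zero_iff.2 ⟨?_, ?_⟩ : w = 0)
  · simpa [hinner, hQ.ne'] using hw0
  · simpa [hinner, hQ.ne'] using hw1

lemma sum_range_inv_max_one_le (K : ℕ) :
    ∑ n ∈ Finset.range (K + 1), (max (n : ℝ) 1)⁻¹ ≤ 2 + log K := by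
  rw [Finset.sum_range_succ']
  have hharm : ∑ i ∈ Finset.range K, (max ((i + 1 : ℕ) : ℝ) 1)⁻¹ = harmonic K := by
    simp [harmonic]
  rw [hharm, Nat.cast_zero, max_eq_right zero_le_one, inv_one]
  linarith [harmonic_le_one_add_log K]

lemma max_natFloor_one_mul_le {u v : E2} (hp : 0 ≤ ⟪u, v⟫) (hn : ‖u‖ ≤ ‖v‖) :
    max (⌊⟪u, v⟫ / ‖u‖ ^ 2⌋₊ : ℝ) 1 * ‖u‖ ^ 2 ≤ ‖u‖ * ‖v‖ := by
  rw [max_mul_of_nonneg _ _ (sq_nonneg _), one_mul]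
  refine max_le ?_ (by rw [sq]; exact mul_le_mul_of_nonneg_left hn (norm_nonneg u))
  rcases (sq_nonneg ‖u‖).eq_or_lt with h | h
  · rw [← h, mul_zero]; positivity
  calc (⌊⟪u, v⟫ / ‖u‖ ^ 2⌋₊ : ℝ) * ‖u‖ ^ 2 ≤ ⟪u, v⟫ :=
        (le_div_iff₀ h).1 (Nat.floor_le (by positivity))
    _ ≤ ‖u‖ * ‖v‖ := real_inner_le_norm u v

lemma le_inner_of_sqrt_le_norm {κ : ℝ} (hκ : 1 ≤ κ) {u v : E2} (hu : √κ ≤ ‖u‖) (hn : ‖u‖ ≤ ‖v‖)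
    (hp : 0 ≤ ⟪u, v⟫) (hd : |det2 u v| = 1) : (κ - κ⁻¹) / 2 ≤ ⟪u, v⟫ := by
  have hκu : κ ≤ ‖u‖ * ‖v‖ := by
    calc κ = √κ * √κ := (mul_self_sqrt (by linarith)).symm
      _ ≤ ‖u‖ * ‖v‖ := mul_le_mul hu (hu.trans hn) (sqrt_nonneg κ) (norm_nonneg u)
  have hN := norm_mul_norm_sq_of_abs_det2_eq_one hd
  have hκ' : κ⁻¹ * κ = 1 := inv_mul_cancel₀ (by positivity)
  have hκi : κ⁻¹ ≤ 1 := inv_le_one_of_one_le₀ hκ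
  nlinarith [inv_pos.2 (by linarith : 0 < κ)]

lemma totalBad_eq_zero {κ : ℝ} (hκ : 1 ≤ κ) {F : E2 → ℝ}
    (hF : ∀ w : E2, F w = √(κ⁻¹ * w 0 ^ 2 + κ * w 1 ^ 2)) {u : E2} (hu : √κ ≤ ‖u‖) :
    totalBad F u = 0 :=
  ENNReal.tsum_eq_zero.2 fun ⟨_, _, hn, hp, hd⟩ => by
    rw [badAngles_eq_empty hκ hF (le_inner_of_sqrt_le_norm hκ hu hn hp hd) hd, measure_empty]

lemma totalBad_le {κ : ℝ} (hκ : 1 ≤ κ) {F : E2 → ℝ}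
    (hF : ∀ w : E2, F w = √(κ⁻¹ * w 0 ^ 2 + κ * w 1 ^ 2)) {u : E2} (hu : IsIntVec u) (hu0 : u ≠ 0) :
    totalBad F u ≤ ENNReal.ofReal (80 * (1 + log κ) / ‖u‖ ^ 2) := by
  classical
  have hQ := one_le_norm_sq_of_isIntVec hu hu0
  set K := ⌊κ⌋₊
  set T : Finset (ℕ × ℝ) := Finset.range (K + 1) ×ˢ {1, -1}
  set f : ℕ × ℝ → ENNReal := fun x => ENNReal.ofReal (20 / (max (x.1 : ℝ) 1 * ‖u‖ ^ 2))
  -- each admissible `v` is determined by `⌊⟪u, v⟫ / ‖u‖²⌋` and `det(u, v)`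
  let Ψ : {v : E2 // IsIntVec v ∧ ‖u‖ ≤ ‖v‖ ∧ 0 ≤ ⟪u, v⟫ ∧ |det2 u v| = 1} → ℕ × ℝ :=
    fun v => (⌊⟪u, v.1⟫ / ‖u‖ ^ 2⌋₊, det2 u v.1)
  have hΨ : Function.Injective Ψ := by
    intro ⟨v, hv, _, hp, _⟩ ⟨v', hv', _, hp', hd'⟩ hΨvv'
    simp only [Ψ, Prod.mk.injEq] at hΨvv'
    refine Subtype.ext (eq_of_det2_eq_of_floor_eq hv hv' hd' hΨvv'.2 ?_)
    rw [← Int.natCast_floor_eq_floor (by positivity), ← Int.natCast_floor_eq_floor (by positivity),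
      hΨvv'.1]
  have hbound : ∀ v, volume (badAngles F u v.1) ≤ (T : Set (ℕ × ℝ)).indicator f (Ψ v) := by
    rintro ⟨v, hv, hn, hp, hd⟩
    by_cases hs : (κ - κ⁻¹) / 2 ≤ ⟪u, v⟫
    · simp [badAngles_eq_empty hκ hF hs hd]
    have hmem : Ψ ⟨v, hv, hn, hp, hd⟩ ∈ T := by
      refine Finset.mem_product.2 ⟨Finset.mem_range_succ_iff.2 (Nat.floor_mono ?_), ?_⟩
      · have := inv_pos.2 (zero_lt_one.trans_le hκ)
        linarith [div_le_self hp hQ]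
      · simpa using (abs_eq zero_le_one).1 hd
    rw [Set.indicator_of_mem (Finset.mem_coe.2 hmem)]
    refine (volume_badAngles_le hκ hF hp hd).trans (ENNReal.ofReal_le_ofReal ?_)
    exact div_le_div_of_nonneg_left (by norm_num) (by positivity) (max_natFloor_one_mul_le hp hn)
  calc totalBad F u ≤ ∑' v, (T : Set (ℕ × ℝ)).indicator f (Ψ v) := ENNReal.tsum_le_tsum hbound
    _ ≤ ∑' x, (T : Set (ℕ × ℝ)).indicator f x := ENNReal.tsum_comp_le_tsum_of_injective hΨ _
    _ = ∑ x ∈ T, f x := (sum_eq_tsum_indicator f T).symm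
    _ = ENNReal.ofReal (40 / ‖u‖ ^ 2 * ∑ n ∈ Finset.range (K + 1), (max (n : ℝ) 1)⁻¹) := by
      rw [← ENNReal.ofReal_sum_of_nonneg (fun x _ => by positivity), Finset.sum_product,
        Finset.mul_sum]
      congr 1
      refine Finset.sum_congr rfl fun n _ => ?_
      rw [Finset.sum_pair (by norm_num)]
      field_simp
      norm_num
    _ ≤ ENNReal.ofReal (80 * (1 + log κ) / ‖u‖ ^ 2) := by
      refine ENNReal.ofReal_le_ofReal ?_
      have hK : 0 < (K : ℝ) := by exact_mod_cast Nat.floor_pos.2 hκ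
      have hlogK : log K ≤ log κ := Real.log_le_log hK (Nat.floor_le (by linarith))
      have hlogκ : 0 ≤ log κ := Real.log_nonneg hκ
      calc 40 / ‖u‖ ^ 2 * ∑ n ∈ Finset.range (K + 1), (max (n : ℝ) 1)⁻¹
          ≤ 40 / ‖u‖ ^ 2 * (2 + log K) :=
            mul_le_mul_of_nonneg_left (sum_range_inv_max_one_le K) (by positivity)
        _ ≤ 80 * (1 + log κ) / ‖u‖ ^ 2 := by
            rw [div_mul_eq_mul_div]
            exact div_le_div_of_nonneg_right (by linarith) (by positivity)

/-- for the norm `F(x,y) = √(κ⁻¹x² + κy²)` and `u ∈ ℤ² ∖ {0}`, the sum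
over `v` of the measures of the bad-orientation sets `I_{u,v}` is at most
`C(1 + ln κ)/‖u‖²`, and vanishes when `‖u‖ ≥ √κ`. -/
theorem stmt10 : ∃ C : ℝ, 0 < C ∧ ∀ κ : ℝ, 1 ≤ κ →
    ∀ F : E2 → ℝ, (∀ w : E2, F w = Real.sqrt (κ⁻¹ * (w 0) ^ 2 + κ * (w 1) ^ 2)) →
    ∀ u : E2, IsIntVec u → u ≠ 0 →
      totalBad F u ≤ ENNReal.ofReal (C * (1 + Real.log κ) / ‖u‖ ^ 2) ∧
      (Real.sqrt κ ≤ ‖u‖ → totalBad F u = 0) :=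
  ⟨80, by norm_num, fun _ hκ _ hF _ hu hu0 =>
    ⟨totalBad_le hκ hF hu hu0, fun h => totalBad_eq_zero hκ hF h⟩⟩
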